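/- (Generating function for continuous dual q-inverse Hahn polynomials.) Let q ∈ ℂ with 0 < |q| < 1, let a, b, c ∈ ℂ* with 1/(ab) ∉ Ω_q, 1/(ac) ∉ Ω_q and abct ∉ Ω_q, let z ∈ ℂ*, x = (z + z^{−1})/2, and t ∈ ℂ* with |t| < 1 and |abct| < 1. Then ∑_{n=0}^∞ t^n q^{n(n−1)} p_n(x;a,b,c|q^{−1}) / ( (q;q)_n (1/(ab);q)_n (1/(ac);q)_n ) = [ 1 / (abct;q)_∞ ] · ∑_{k=0}^∞ [ (z/a, 1/(az);q)_k / ( (q, 1/(ab), 1/(ac);q)_k ) ] (−1)^k q^{k(k−1)/2} (at)^k. -/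

import Mathlib

open Finset

/-- The finite q-Pochhammer symbol `(a;q)_n = ∏_{j=0}^{n-1} (1 - a q^j)`. -/
noncomputable def qPoch (a q : ℂ) (n : ℕ) : ℂ := ∏ j ∈ Finset.range n, (1 - a * q ^ j)

/-- The infinite q-Pochhammer symbol `(a;q)_∞ = ∏_{j=0}^{∞} (1 - a q^j)`. -/
noncomputable def qPochInf (a q : ℂ) : ℂ := ∏' j : ℕ, (1 - a * q ^ j)

/-- `Ω_q = {q^{-k} : k ∈ ℕ}`. -/
def Omega (q : ℂ) : Set ℂ := {w : ℂ | ∃ k : ℕ, w = q⁻¹ ^ k}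

/-- The continuous dual q-inverse Hahn polynomials `p_n(x;a,b,c|q⁻¹)`, in the
representation
`q^{-n(n-1)} (abc)^n (1/(ab), 1/(ac);q)_n · 3φ2(q^{-n}, z/a, 1/(az); 1/(ab), 1/(ac); q, q^n/(bc))`,
where `x = (z + z⁻¹)/2`. -/
noncomputable def cdqiHahn (q a b c z : ℂ) (n : ℕ) : ℂ :=
  q ^ (-((n * (n - 1) : ℕ) : ℤ)) * (a * b * c) ^ n *
    qPoch (1 / (a * b)) q n * qPoch (1 / (a * c)) q n *
    ∑ k ∈ Finset.range (n + 1),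
      (qPoch (q⁻¹ ^ n) q k * qPoch (z / a) q k * qPoch (1 / (a * z)) q k) /
        (qPoch q q k * qPoch (1 / (a * b)) q k * qPoch (1 / (a * c)) q k) *
        (q ^ n / (b * c)) ^ k


open Filter Topology

set_option maxHeartbeats 1000000

noncomputable abbrev Complex.abs : AbsoluteValue ℂ ℝ := NormedField.toAbsoluteValue ℂ

lemma Complex.norm_eq_abs (w : ℂ) : ‖w‖ = Complex.abs w := rfl

lemma qPoch_zero' (a q : ℂ) : qPoch a q 0 = 1 := by simp [qPoch]

lemma qPoch_succ (a q : ℂ) (n : ℕ) : qPoch a q (n + 1) = qPoch a q n * (1 - a * q ^ n) :=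
  Finset.prod_range_succ _ _

lemma qPoch_ne_zero {a q : ℂ} (h : ∀ j : ℕ, 1 - a * q ^ j ≠ 0) (n : ℕ) : qPoch a q n ≠ 0 :=
  Finset.prod_ne_zero_iff.2 fun j _ => h j

lemma factor_ne_of_small {w : ℂ} (h : Complex.abs w < 1) : 1 - w ≠ 0 := by
  intro hw
  have : w = 1 := by linear_combination -hw
  simp [this] at h

lemma abs_mul_pow_lt_one {u q : ℂ} (hu : Complex.abs u < 1) (hq : Complex.abs q < 1) (j : ℕ) :
    Complex.abs (u * q ^ j) < 1 := by
  rw [map_mul, map_pow]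
  calc Complex.abs u * Complex.abs q ^ j ≤ Complex.abs u * 1 := by
        gcongr
        exact pow_le_one₀ (Complex.abs.nonneg q) hq.le
    _ < 1 := by simpa using hu

lemma factor_q_ne {q : ℂ} (hq1 : Complex.abs q < 1) (j : ℕ) : 1 - q * q ^ j ≠ 0 :=
  factor_ne_of_small (abs_mul_pow_lt_one hq1 hq1 j)

lemma factor_ne_of_not_omega {q α : ℂ} (hq0 : q ≠ 0) (h : α ∉ Omega q) (j : ℕ) :
    1 - α * q ^ j ≠ 0 := by
  intro hα
  apply h
  refine ⟨j, ?_⟩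
  have h1 : α * q ^ j = 1 := by linear_combination -hα
  rw [inv_pow]
  exact eq_inv_of_mul_eq_one_left h1

lemma hexp_aux (q : ℂ) (k : ℕ) : q ^ (k * (k - 1) / 2) * q ^ k = q ^ ((k + 1) * k / 2) := by
  rw [← pow_add]
  congr 1
  rw [← Nat.choose_two_right]
  have h2 : (k + 1) * k / 2 = (k + 1).choose 2 := by rw [Nat.choose_two_right]; simp
  rw [h2, Nat.choose_succ_succ, Nat.choose_one_right]
  show k.choose 2 + k = k + k.choose 2
  omega

lemma key_identity {q : ℂ} (hq0 : q ≠ 0) (n : ℕ) (k : ℕ) (hk : k ≤ n) :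
    qPoch (q⁻¹ ^ n) q k * (q ^ n) ^ k * qPoch q q (n - k)
      = (-1) ^ k * q ^ (k * (k - 1) / 2) * qPoch q q n := by
  induction k with
  | zero => simp [qPoch]
  | succ k ih =>
    have hk' : k ≤ n := Nat.le_of_succ_le hk
    have ihe := ih hk'
    have h1 : n - k = (n - (k + 1)) + 1 := by omega
    rw [h1, qPoch_succ] at ihe
    have hA : q⁻¹ ^ n * q ^ n = 1 := by
      rw [inv_pow]; field_simp
    have hB : q ^ k * q ^ (n - k) = q ^ n := by rw [← pow_add]; congr 1; omega
    have h2 : q * q ^ (n - (k + 1)) = q ^ (n - k) := by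
      rw [← pow_succ']; congr 1; omega
    have hfac : (1 - q⁻¹ ^ n * q ^ k) * q ^ n = -(q ^ k) * (1 - q * q ^ (n - (k + 1))) := by
      rw [h2]
      linear_combination (-(q ^ k)) * hA - hB
    have hexp := hexp_aux q k
    rw [qPoch_succ, pow_succ]
    simp only [Nat.add_sub_cancel]
    linear_combination (qPoch (q⁻¹ ^ n) q k * (q ^ n) ^ k * qPoch q q (n - (k + 1))) * hfac
      + (-(q ^ k)) * ihe + ((-1) ^ (k + 1) * qPoch q q n) * hexp

noncomputable def gfun (q a b c t z : ℂ) (k : ℕ) : ℂ :=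
  (qPoch (z / a) q k * qPoch (1 / (a * z)) q k) /
    (qPoch q q k * qPoch (1 / (a * b)) q k * qPoch (1 / (a * c)) q k) *
    ((-1) ^ k * q ^ (k * (k - 1) / 2) * (a * t) ^ k)

noncomputable def hfun (q u : ℂ) (m : ℕ) : ℂ := u ^ m / qPoch q q m

lemma termwise {q a b c t z : ℂ} (hq0 : q ≠ 0) (hq1 : Complex.abs q < 1)
    (hb : b ≠ 0) (hc : c ≠ 0)
    (hab : ∀ j : ℕ, 1 - (1 / (a * b)) * q ^ j ≠ 0)
    (hac : ∀ j : ℕ, 1 - (1 / (a * c)) * q ^ j ≠ 0) (n : ℕ) :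
    t ^ n * q ^ (n * (n - 1)) * cdqiHahn q a b c z n /
        (qPoch q q n * qPoch (1 / (a * b)) q n * qPoch (1 / (a * c)) q n)
      = ∑ k ∈ Finset.range (n + 1), gfun q a b c t z k * hfun q (a * b * c * t) (n - k) := by
  have hPq : ∀ m, qPoch q q m ≠ 0 := qPoch_ne_zero (factor_q_ne hq1)
  have hPab : ∀ m, qPoch (1 / (a * b)) q m ≠ 0 := qPoch_ne_zero hab
  have hPac : ∀ m, qPoch (1 / (a * c)) q m ≠ 0 := qPoch_ne_zero hac
  have hzp : (q : ℂ) ^ (-((n * (n - 1) : ℕ) : ℤ)) = (q ^ (n * (n - 1)))⁻¹ := by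
    rw [zpow_neg, zpow_natCast]
  rw [cdqiHahn, hzp, Finset.mul_sum, Finset.mul_sum, Finset.sum_div]
  refine Finset.sum_congr rfl fun k hk => ?_
  rw [Finset.mem_range_succ_iff] at hk
  have key := key_identity hq0 n k hk
  have hpow : (a * b * c * t) ^ (n - k) * ((a * t) ^ k * (b * c) ^ k)
      = (a * b * c) ^ n * t ^ n := by
    have h1 : (a * t) ^ k * (b * c) ^ k = (a * b * c * t) ^ k := by
      rw [← mul_pow]; ring_nf
    rw [h1, ← pow_add]
    have h2 : n - k + k = n := by omega
    rw [h2, mul_pow]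
  rw [gfun, hfun]
  have e1 := hPq n; have e2 := hPq k; have e3 := hPq (n - k)
  have e4 := hPab n; have e5 := hPab k; have e6 := hPac n; have e7 := hPac k
  field_simp
  rw [inv_pow, ← one_div] at key
  rw [← one_div_pow] at key
  have hpow' : (a * b * c) ^ n * t ^ n * ((b * c) ^ k)⁻¹ = (a * b * c * t) ^ (n - k) * (a * t) ^ k := by
    rw [← hpow]; field_simp
  linear_combination (qPoch (z / a) q k * qPoch (1 / (a * z)) q k * t ^ n * (a * b * c) ^ n *
      ((b * c) ^ k)⁻¹) * key
    + (qPoch (z / a) q k * qPoch (1 / (a * z)) q k * (-1) ^ k * q ^ (k * (k - 1) / 2) *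
      qPoch q q n) * hpow'

lemma tendsto_one_sub {q w : ℂ} (hq1 : Complex.abs q < 1) :
    Tendsto (fun k : ℕ => 1 - w * q ^ k) atTop (𝓝 1) := by
  have h0 : Tendsto (fun k : ℕ => (q : ℂ) ^ k) atTop (𝓝 0) :=
    tendsto_pow_atTop_nhds_zero_of_norm_lt_one (by rwa [Complex.norm_eq_abs])
  have h1 : Tendsto (fun k : ℕ => (1 : ℂ) - w * q ^ k) atTop (𝓝 (1 - w * 0)) :=
    (tendsto_const_nhds (x := (1 : ℂ))).sub (h0.const_mul w)
  simpa using h1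

lemma gfun_succ {q a b c t z : ℂ} (hq1 : Complex.abs q < 1)
    (hab : ∀ j : ℕ, 1 - (1 / (a * b)) * q ^ j ≠ 0)
    (hac : ∀ j : ℕ, 1 - (1 / (a * c)) * q ^ j ≠ 0) (k : ℕ) :
    gfun q a b c t z (k + 1) = gfun q a b c t z k *
      (((1 - (z / a) * q ^ k) * (1 - (1 / (a * z)) * q ^ k) * (-(a * t) * q ^ k)) /
        ((1 - q * q ^ k) * (1 - (1 / (a * b)) * q ^ k) * (1 - (1 / (a * c)) * q ^ k))) := by
  have e2 := qPoch_ne_zero (factor_q_ne hq1) k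
  have e5 := qPoch_ne_zero hab k
  have e7 := qPoch_ne_zero hac k
  have f1 := factor_q_ne hq1 k
  have f2 := hab k
  have f3 := hac k
  rw [gfun, gfun]
  simp only [qPoch_succ, Nat.add_sub_cancel, ← hexp_aux q k]
  field_simp
  ring

lemma summable_norm_gfun {q a b c t z : ℂ} (hq1 : Complex.abs q < 1)
    (hab : ∀ j : ℕ, 1 - (1 / (a * b)) * q ^ j ≠ 0)
    (hac : ∀ j : ℕ, 1 - (1 / (a * c)) * q ^ j ≠ 0) :
    Summable (fun k => ‖gfun q a b c t z k‖) := by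
  have h0 : Tendsto (fun k : ℕ => (q : ℂ) ^ k) atTop (𝓝 0) :=
    tendsto_pow_atTop_nhds_zero_of_norm_lt_one (by rwa [Complex.norm_eq_abs])
  have hnum : Tendsto (fun k : ℕ => (1 - (z / a) * q ^ k) * (1 - (1 / (a * z)) * q ^ k) *
      (-(a * t) * q ^ k)) atTop (𝓝 0) := by
    have := ((tendsto_one_sub (w := z / a) hq1).mul
      (tendsto_one_sub (w := 1 / (a * z)) hq1)).mul (h0.const_mul (-(a * t)))
    simpa using this
  have hden : Tendsto (fun k : ℕ => (1 - q * q ^ k) * (1 - (1 / (a * b)) * q ^ k) *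
      (1 - (1 / (a * c)) * q ^ k)) atTop (𝓝 1) := by
    have := ((tendsto_one_sub (w := q) hq1).mul
      (tendsto_one_sub (w := 1 / (a * b)) hq1)).mul (tendsto_one_sub (w := 1 / (a * c)) hq1)
    simpa using this
  have hphi : Tendsto (fun k : ℕ => ‖((1 - (z / a) * q ^ k) * (1 - (1 / (a * z)) * q ^ k) *
      (-(a * t) * q ^ k)) / ((1 - q * q ^ k) * (1 - (1 / (a * b)) * q ^ k) *
      (1 - (1 / (a * c)) * q ^ k))‖) atTop (𝓝 0) := by
    have := (hnum.div hden one_ne_zero).norm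
    simpa using this
  have hev : ∀ᶠ k in atTop, ‖((1 - (z / a) * q ^ k) * (1 - (1 / (a * z)) * q ^ k) *
      (-(a * t) * q ^ k)) / ((1 - q * q ^ k) * (1 - (1 / (a * b)) * q ^ k) *
      (1 - (1 / (a * c)) * q ^ k))‖ ≤ 1 / 2 :=
    Filter.Tendsto.eventually_le_const (by norm_num : (0:ℝ) < 1/2) hphi
  apply summable_of_ratio_norm_eventually_le (r := 1 / 2) (by norm_num)
  filter_upwards [hev] with k hk
  rw [Real.norm_of_nonneg (norm_nonneg _), Real.norm_of_nonneg (norm_nonneg _),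
    gfun_succ hq1 hab hac k, norm_mul]
  calc ‖gfun q a b c t z k‖ * ‖_‖ ≤ ‖gfun q a b c t z k‖ * (1 / 2) := by gcongr
    _ = 1 / 2 * ‖gfun q a b c t z k‖ := by ring

lemma hfun_succ {q u : ℂ} (hq1 : Complex.abs q < 1) (m : ℕ) :
    hfun q u (m + 1) = hfun q u m * (u / (1 - q * q ^ m)) := by
  have e := qPoch_ne_zero (factor_q_ne hq1) m
  have f := factor_q_ne hq1 m
  rw [hfun, hfun, qPoch_succ, pow_succ]
  field_simp

lemma summable_norm_hfun {q u : ℂ} (hq1 : Complex.abs q < 1) (hu : Complex.abs u < 1) :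
    Summable (fun m => ‖hfun q u m‖) := by
  have hrat : Tendsto (fun m : ℕ => ‖u / (1 - q * q ^ m)‖) atTop (𝓝 ‖u‖) := by
    have h1 : Tendsto (fun m : ℕ => u / (1 - q * q ^ m)) atTop (𝓝 (u / 1)) :=
      tendsto_const_nhds.div (tendsto_one_sub hq1) one_ne_zero
    simpa using h1.norm
  have hev : ∀ᶠ m in atTop, ‖u / (1 - q * q ^ m)‖ ≤ (1 + ‖u‖) / 2 := by
    exact Filter.Tendsto.eventually_le_const
      (by rw [Complex.norm_eq_abs]; linarith) hrat
  apply summable_of_ratio_norm_eventually_le (r := (1 + ‖u‖) / 2)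
  · rw [Complex.norm_eq_abs]; linarith
  filter_upwards [hev] with m hm
  rw [Real.norm_of_nonneg (norm_nonneg _), Real.norm_of_nonneg (norm_nonneg _),
    hfun_succ hq1 m, norm_mul]
  calc ‖hfun q u m‖ * ‖_‖ ≤ ‖hfun q u m‖ * ((1 + ‖u‖) / 2) := by gcongr
    _ = (1 + ‖u‖) / 2 * ‖hfun q u m‖ := by ring

lemma prod_one_sub_ge (s : Finset ℕ) (x : ℕ → ℝ) (h0 : ∀ j ∈ s, 0 ≤ x j)
    (h1 : ∀ j ∈ s, x j ≤ 1) :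
    1 - ∑ j ∈ s, x j ≤ ∏ j ∈ s, (1 - x j) := by
  induction s using Finset.cons_induction with
  | empty => simp
  | cons i s hi ih =>
    rw [Finset.prod_cons, Finset.sum_cons]
    have h0' : ∀ j ∈ s, 0 ≤ x j := fun j hj => h0 j (Finset.mem_cons_of_mem hj)
    have h1' : ∀ j ∈ s, x j ≤ 1 := fun j hj => h1 j (Finset.mem_cons_of_mem hj)
    have ih' := ih h0' h1'
    have hs : 0 ≤ ∑ j ∈ s, x j := Finset.sum_nonneg h0'
    have hp : 0 ≤ ∏ j ∈ s, (1 - x j) :=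
      Finset.prod_nonneg fun j hj => by linarith [h1' j hj]
    nlinarith [h0 i (Finset.mem_cons_self i s), h1 i (Finset.mem_cons_self i s)]

lemma exists_qPoch_lb {α q : ℂ} (hq1 : Complex.abs q < 1)
    (h : ∀ j : ℕ, 1 - α * q ^ j ≠ 0) :
    ∃ δ : ℝ, 0 < δ ∧ ∀ n : ℕ, δ ≤ ‖qPoch α q n‖ := by
  set x : ℕ → ℝ := fun j => ‖α * q ^ j‖ with hxdef
  have hx : Summable x := by
    have : Summable (fun j : ℕ => ‖α‖ * ‖q‖ ^ j) :=
      (summable_geometric_of_lt_one (norm_nonneg q) (by rwa [Complex.norm_eq_abs])).mul_left _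
    simpa [hxdef, norm_mul, norm_pow] using this
  have htail : Tendsto (fun J : ℕ => ∑' k, x (k + J)) atTop (𝓝 0) := tendsto_sum_nat_add x
  obtain ⟨J, hJ⟩ := (htail.eventually_lt_const (by norm_num : (0:ℝ) < 1/2)).exists
  have hxJ : ∀ j, J ≤ j → x j ≤ 1 / 2 := by
    intro j hj
    have hsum : Summable (fun k => x (k + J)) := (summable_nat_add_iff J).2 hx
    have : x ((j - J) + J) ≤ ∑' k, x (k + J) :=
      hsum.le_tsum _ (fun _ _ => norm_nonneg _)
    rw [Nat.sub_add_cancel hj] at this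
    linarith
  have key : ∀ n, J ≤ n → ‖qPoch α q J‖ * (1 / 2) ≤ ‖qPoch α q n‖ := by
    intro n hn
    have hsplit : qPoch α q J * ∏ j ∈ Finset.Ico J n, (1 - α * q ^ j) = qPoch α q n :=
      Finset.prod_range_mul_prod_Ico _ hn
    rw [← hsplit, norm_mul]
    have h2 : (1:ℝ) / 2 ≤ ‖∏ j ∈ Finset.Ico J n, (1 - α * q ^ j)‖ := by
      rw [norm_prod]
      have step1 : ∏ j ∈ Finset.Ico J n, (1 - x j) ≤ ∏ j ∈ Finset.Ico J n, ‖1 - α * q ^ j‖ := by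
        apply Finset.prod_le_prod
        · intro j hj
          have := hxJ j (Finset.mem_Ico.1 hj).1
          linarith
        · intro j hj
          have h3 : ‖(1:ℂ)‖ - x j ≤ ‖1 - α * q ^ j‖ := norm_sub_norm_le _ _
          rw [norm_one] at h3
          linarith
      have step2 : 1 - ∑ j ∈ Finset.Ico J n, x j ≤ ∏ j ∈ Finset.Ico J n, (1 - x j) := by
        apply prod_one_sub_ge
        · intro j _; exact norm_nonneg _
        · intro j hj
          have := hxJ j (Finset.mem_Ico.1 hj).1
          linarith
      have step3 : ∑ j ∈ Finset.Ico J n, x j ≤ 1 / 2 := by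
        rw [Finset.sum_Ico_eq_sum_range]
        have hsum : Summable (fun k => x (k + J)) := (summable_nat_add_iff J).2 hx
        have h5 := Summable.sum_le_tsum (Finset.range (n - J))
          (fun (i : ℕ) _ => norm_nonneg (α * q ^ (i + J))) hsum
        calc ∑ i ∈ Finset.range (n - J), x (J + i)
            = ∑ i ∈ Finset.range (n - J), x (i + J) := by
              refine Finset.sum_congr rfl fun i _ => by rw [Nat.add_comm]
          _ ≤ ∑' k, x (k + J) := h5
        linarith
      linarith
    exact mul_le_mul_of_nonneg_left h2 (norm_nonneg _)
  have hne : (Finset.range (J + 1)).Nonempty := ⟨0, by simp⟩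
  set δ1 : ℝ := (Finset.range (J + 1)).inf' hne (fun k => ‖qPoch α q k‖) with hδ1
  have hδ1pos : 0 < δ1 := by
    rw [hδ1, Finset.lt_inf'_iff]
    intro k _
    exact norm_pos_iff.2 (qPoch_ne_zero h k)
  have hPJpos : 0 < ‖qPoch α q J‖ := norm_pos_iff.2 (qPoch_ne_zero h J)
  refine ⟨min δ1 (‖qPoch α q J‖ * (1 / 2)), by positivity, fun n => ?_⟩
  rcases le_or_gt n J with hn | hn
  · calc min δ1 (‖qPoch α q J‖ * (1 / 2)) ≤ δ1 := min_le_left _ _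
      _ ≤ ‖qPoch α q n‖ := Finset.inf'_le _ (by simpa using Nat.lt_succ_of_le hn)
  · calc min δ1 (‖qPoch α q J‖ * (1 / 2)) ≤ ‖qPoch α q J‖ * (1 / 2) := min_le_right _ _
      _ ≤ ‖qPoch α q n‖ := key n hn.le

lemma abs_mul_lt_one {q u : ℂ} (hq : Complex.abs q < 1) (hu : Complex.abs u < 1) :
    Complex.abs (q * u) < 1 := by
  have := abs_mul_pow_lt_one hu hq 1
  simpa [mul_comm] using this

lemma euler_funceq {q u : ℂ} (hq1 : Complex.abs q < 1) (hu : Complex.abs u < 1) :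
    (1 - u) * ∑' m, hfun q u m = ∑' m, hfun q (q * u) m := by
  have hqu : Complex.abs (q * u) < 1 := abs_mul_lt_one hq1 hu
  have hS : Summable (fun m => hfun q u m) := (summable_norm_hfun hq1 hu).of_norm
  have hS' : Summable (fun m => hfun q (q * u) m) := (summable_norm_hfun hq1 hqu).of_norm
  have hd : Summable (fun m => hfun q u m - hfun q (q * u) m) := hS.sub hS'
  have hsucc : ∀ m : ℕ, hfun q u (m + 1) - hfun q (q * u) (m + 1) = u * hfun q u m := by
    intro m
    have e := qPoch_ne_zero (factor_q_ne hq1) m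
    have f := factor_q_ne hq1 m
    rw [hfun, hfun, hfun, qPoch_succ]
    field_simp
    ring
  have h1 : ∑' m, hfun q u m - ∑' m, hfun q (q * u) m = u * ∑' m, hfun q u m := by
    rw [← Summable.tsum_sub hS hS', Summable.tsum_eq_zero_add hd]
    have h0 : hfun q u 0 - hfun q (q * u) 0 = 0 := by simp [hfun, qPoch_zero']
    rw [h0, zero_add]
    calc ∑' m, (hfun q u (m + 1) - hfun q (q * u) (m + 1))
        = ∑' m, u * hfun q u m := tsum_congr hsucc
      _ = u * ∑' m, hfun q u m := tsum_mul_left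
  linear_combination h1

lemma euler_iter {q u : ℂ} (hq1 : Complex.abs q < 1) (hu : Complex.abs u < 1) (N : ℕ) :
    qPoch u q N * ∑' m, hfun q u m = ∑' m, hfun q (q ^ N * u) m := by
  induction N with
  | zero => simp [qPoch]
  | succ N ih =>
    have huN : Complex.abs (q ^ N * u) < 1 := by
      have := abs_mul_pow_lt_one hu hq1 N
      simpa [mul_comm] using this
    have step := euler_funceq hq1 huN
    have harg : q * (q ^ N * u) = q ^ (N + 1) * u := by ring
    rw [harg] at step
    rw [qPoch_succ]
    calc qPoch u q N * (1 - u * q ^ N) * ∑' m, hfun q u m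
        = (1 - u * q ^ N) * (qPoch u q N * ∑' m, hfun q u m) := by ring
      _ = (1 - u * q ^ N) * ∑' m, hfun q (q ^ N * u) m := by rw [ih]
      _ = (1 - q ^ N * u) * ∑' m, hfun q (q ^ N * u) m := by ring_nf
      _ = ∑' m, hfun q (q ^ (N + 1) * u) m := step

lemma multipliable_qPochInf {q u : ℂ} (hq1 : Complex.abs q < 1) (hu : Complex.abs u < 1) :
    Multipliable (fun j : ℕ => 1 - u * q ^ j) := by
  have hfac : ∀ j : ℕ, (1 : ℂ) - u * q ^ j ≠ 0 :=
    fun j => factor_ne_of_small (abs_mul_pow_lt_one hu hq1 j)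
  have hlog : Summable (fun j : ℕ => Complex.log (1 - u * q ^ j)) := by
    have hgeo : Summable (fun j : ℕ => 3 / 2 * (Complex.abs u * Complex.abs q ^ j)) :=
      ((summable_geometric_of_lt_one (Complex.abs.nonneg q) hq1).mul_left _).mul_left _
    have h0 : Tendsto (fun j : ℕ => (q : ℂ) ^ j) atTop (𝓝 0) :=
      tendsto_pow_atTop_nhds_zero_of_norm_lt_one (by rwa [Complex.norm_eq_abs])
    have hev : ∀ᶠ j in atTop, ‖(u * q ^ j : ℂ)‖ ≤ 1 / 2 := by
      have h1 : Tendsto (fun j : ℕ => ‖(u * q ^ j : ℂ)‖) atTop (𝓝 0) := by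
        have := (h0.const_mul u).norm
        simpa using this
      exact Filter.Tendsto.eventually_le_const (by norm_num : (0:ℝ) < 1/2) h1
    apply Summable.of_norm_bounded_eventually_nat hgeo
    filter_upwards [hev] with j hj
    calc ‖Complex.log (1 - u * q ^ j)‖
        = ‖Complex.log (1 + -(u * q ^ j))‖ := by ring_nf
      _ ≤ 3 / 2 * ‖-(u * q ^ j)‖ := Complex.norm_log_one_add_half_le_self (by simpa using hj)
      _ = 3 / 2 * (Complex.abs u * Complex.abs q ^ j) := by
          rw [norm_neg, Complex.norm_eq_abs, map_mul, map_pow]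
  exact Complex.multipliable_of_summable_log hlog

lemma euler_prod {q u : ℂ} (hq1 : Complex.abs q < 1) (hu : Complex.abs u < 1) :
    qPochInf u q * ∑' m, hfun q u m = 1 := by
  have hM := multipliable_qPochInf hq1 hu
  have hprod : Tendsto (fun N : ℕ => qPoch u q N) atTop (𝓝 (qPochInf u q)) :=
    hM.hasProd.tendsto_prod_nat
  have htend1 : Tendsto (fun N : ℕ => qPoch u q N * ∑' m, hfun q u m) atTop
      (𝓝 (qPochInf u q * ∑' m, hfun q u m)) := hprod.mul_const _
  obtain ⟨δ, hδ, hlb⟩ := exists_qPoch_lb hq1 (factor_q_ne hq1)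
  have habsq : ∀ N : ℕ, Complex.abs (q ^ N * u) ≤ Complex.abs u := by
    intro N
    rw [map_mul, map_pow]
    calc Complex.abs q ^ N * Complex.abs u ≤ 1 * Complex.abs u := by
          gcongr
          exact pow_le_one₀ (Complex.abs.nonneg q) hq1.le
      _ = Complex.abs u := one_mul _
  have hbound : ∀ N : ℕ, ‖(∑' m, hfun q (q ^ N * u) m) - 1‖ ≤
      Complex.abs q ^ N * Complex.abs u * (δ⁻¹ * (1 - Complex.abs u)⁻¹) := by
    intro N
    set w := q ^ N * u with hw
    have hwabs : Complex.abs w < 1 := lt_of_le_of_lt (habsq N) hu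
    have hSw : Summable (fun m => hfun q w m) := (summable_norm_hfun hq1 hwabs).of_norm
    have h1 : (∑' m, hfun q w m) - 1 = ∑' m, hfun q w (m + 1) := by
      rw [Summable.tsum_eq_zero_add hSw]
      simp [hfun, qPoch_zero']
    rw [h1]
    have hnorm : Summable (fun m => ‖hfun q w (m + 1)‖) :=
      (summable_nat_add_iff 1).2 (summable_norm_hfun hq1 hwabs)
    have hgeo : Summable (fun m : ℕ => Complex.abs w * δ⁻¹ * Complex.abs u ^ m) :=
      (summable_geometric_of_lt_one (Complex.abs.nonneg u) hu).mul_left _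
    have hterm : ∀ m : ℕ, ‖hfun q w (m + 1)‖ ≤ Complex.abs w * δ⁻¹ * Complex.abs u ^ m := by
      intro m
      rw [hfun, norm_div, Complex.norm_eq_abs, Complex.norm_eq_abs, map_pow, div_eq_mul_inv]
      have hlb' : δ ≤ Complex.abs (qPoch q q (m + 1)) := hlb (m + 1)
      have h3 : (Complex.abs (qPoch q q (m + 1)))⁻¹ ≤ δ⁻¹ := by
        gcongr
      have h2 : Complex.abs w ^ (m + 1) ≤ Complex.abs w * Complex.abs u ^ m := by
        rw [pow_succ']
        gcongr
        exact habsq N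
      calc Complex.abs w ^ (m + 1) * (Complex.abs (qPoch q q (m + 1)))⁻¹
          ≤ (Complex.abs w * Complex.abs u ^ m) * δ⁻¹ :=
            mul_le_mul h2 h3 (by positivity) (by positivity)
        _ = Complex.abs w * δ⁻¹ * Complex.abs u ^ m := by ring
    calc ‖∑' m, hfun q w (m + 1)‖ ≤ ∑' m, ‖hfun q w (m + 1)‖ := norm_tsum_le_tsum_norm hnorm
      _ ≤ ∑' m : ℕ, Complex.abs w * δ⁻¹ * Complex.abs u ^ m := Summable.tsum_le_tsum hterm hnorm hgeo
      _ = Complex.abs w * δ⁻¹ * (1 - Complex.abs u)⁻¹ := by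
          rw [tsum_mul_left, tsum_geometric_of_lt_one (Complex.abs.nonneg u) hu]
      _ = Complex.abs q ^ N * Complex.abs u * (δ⁻¹ * (1 - Complex.abs u)⁻¹) := by
          rw [hw, map_mul, map_pow]; ring
  have hEq : ∀ N : ℕ, qPoch u q N * ∑' m, hfun q u m = ∑' m, hfun q (q ^ N * u) m :=
    euler_iter hq1 hu
  have htend2 : Tendsto (fun N : ℕ => ∑' m, hfun q (q ^ N * u) m) atTop (𝓝 1) := by
    have hz : Tendsto (fun N : ℕ => (∑' m, hfun q (q ^ N * u) m) - 1) atTop (𝓝 0) := by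
      rw [tendsto_zero_iff_norm_tendsto_zero]
      apply squeeze_zero (fun N => norm_nonneg _) hbound
      have hq0' : Tendsto (fun N : ℕ => Complex.abs q ^ N) atTop (𝓝 0) :=
        tendsto_pow_atTop_nhds_zero_of_lt_one (Complex.abs.nonneg q) hq1
      have := (hq0'.mul_const (Complex.abs u)).mul_const (δ⁻¹ * (1 - Complex.abs u)⁻¹)
      simpa using this
    have h := hz.add (tendsto_const_nhds (x := (1 : ℂ)))
    simpa using h
  have htend3 : Tendsto (fun N : ℕ => qPoch u q N * ∑' m, hfun q u m) atTop (𝓝 1) := by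
    simpa only [hEq] using htend2
  exact tendsto_nhds_unique htend1 htend3

/-- Generating function for the continuous dual q-inverse Hahn polynomials. -/
theorem cdqiHahn_generating_function
    (q : ℂ) (hq0 : 0 < ‖q‖) (hq1 : ‖q‖ < 1)
    (a b c t z : ℂ) (ha : a ≠ 0) (hb : b ≠ 0) (hc : c ≠ 0) (ht0 : t ≠ 0) (hz : z ≠ 0)
    (hab : 1 / (a * b) ∉ Omega q) (hac : 1 / (a * c) ∉ Omega q)
    (habct : a * b * c * t ∉ Omega q)
    (x : ℂ) (hx : x = (z + z⁻¹) / 2)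
    (ht : ‖t‖ < 1) (htabc : ‖a * b * c * t‖ < 1) :
    ∑' n : ℕ, t ^ n * q ^ (n * (n - 1)) * cdqiHahn q a b c z n /
        (qPoch q q n * qPoch (1 / (a * b)) q n * qPoch (1 / (a * c)) q n) =
      1 / qPochInf (a * b * c * t) q *
        ∑' k : ℕ, (qPoch (z / a) q k * qPoch (1 / (a * z)) q k) /
          (qPoch q q k * qPoch (1 / (a * b)) q k * qPoch (1 / (a * c)) q k) *
          ((-1) ^ k * q ^ (k * (k - 1) / 2) * (a * t) ^ k) := by
  have hq0' : q ≠ 0 := by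
    intro h
    rw [h] at hq0
    simp at hq0
  have hab' : ∀ j : ℕ, 1 - (1 / (a * b)) * q ^ j ≠ 0 := factor_ne_of_not_omega hq0' hab
  have hac' : ∀ j : ℕ, 1 - (1 / (a * c)) * q ^ j ≠ 0 := factor_ne_of_not_omega hq0' hac
  have hu : Complex.abs (a * b * c * t) < 1 := htabc
  have hGnorm : Summable (fun k => ‖gfun q a b c t z k‖) := summable_norm_gfun hq1 hab' hac'
  have hHnorm : Summable (fun m => ‖hfun q (a * b * c * t) m‖) := summable_norm_hfun hq1 hu
  rw [tsum_congr (termwise hq0' hq1 hb hc hab' hac')]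
  rw [← tsum_mul_tsum_eq_tsum_sum_range_of_summable_norm hGnorm hHnorm]
  have heuler := euler_prod hq1 hu
  have hPinf : qPochInf (a * b * c * t) q ≠ 0 := by
    intro h0
    rw [h0, zero_mul] at heuler
    exact zero_ne_one heuler
  have hH : ∑' m, hfun q (a * b * c * t) m = 1 / qPochInf (a * b * c * t) q := by
    field_simp
    linear_combination heuler
  rw [hH]
  exact mul_comm _ _
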